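/- Let G be an undirected graph (a finite connected loopless multigraph). A chip-distribution x on G is non-terminating if and only if there exists an acyclic orientation of G with indegree vector ρ and a chip-distribution a ≥ 0 such that x ∼ ρ + a. -/

import Mathlib

open Finset

variable {V : Type} [Fintype V] [DecidableEq V]

/-- The outdegree of a vertex `v` in the multidigraph with multiplicity function `m`
(`m u v` is the number of directed edges from `u` to `v`). -/
def outdeg (m : V → V → ℕ) (v : V) : ℤ := ∑ u, (m v u : ℤ)

/-- The indegree of a vertex. -/
def indeg (m : V → V → ℕ) (v : V) : ℤ := ∑ u, (m u v : ℤ)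

/-- The digraph is loopless. -/
def Loopless (m : V → V → ℕ) : Prop := ∀ v, m v v = 0

/-- The digraph is strongly connected: every vertex reaches every vertex on a directed path. -/
def StronglyConnected (m : V → V → ℕ) : Prop :=
  ∀ u v : V, Relation.ReflTransGen (fun a b => 0 < m a b) u v

/-- Firing vertex `v` in chip-distribution `x`: `v` sends a chip along each outgoing edge. -/
def fire (m : V → V → ℕ) (x : V → ℤ) (v : V) : V → ℤ :=
  fun u => x u + (m v u : ℤ) - (if u = v then outdeg m v else 0)

/-- The degree (total number of chips) of a chip-distribution / divisor. -/
def degSum (x : V → ℤ) : ℤ := ∑ v, x v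

/-- The state of the chip-firing game after `n` steps, starting from `x` and
firing the vertices `s 0, s 1, …` in this order. -/
def gameState (m : V → V → ℕ) (x : V → ℤ) (s : ℕ → V) : ℕ → (V → ℤ)
  | 0 => x
  | n + 1 => fire m (gameState m x s n) (s n)

/-- `s` encodes an infinite legal chip-firing game starting from `x`:
at each step the fired vertex is active. -/
def InfGame (m : V → V → ℕ) (x : V → ℤ) (s : ℕ → V) : Prop :=
  ∀ n, outdeg m (s n) ≤ gameState m x s n (s n)

/-- A chip-distribution is terminating if no infinite legal game starts from it. -/
def Terminating (m : V → V → ℕ) (x : V → ℤ) : Prop :=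
  ¬ ∃ s : ℕ → V, InfGame m x s

/-- The Laplacian of the digraph applied to `z`. -/
def lap (m : V → V → ℕ) (z : V → ℤ) : V → ℤ :=
  fun u => (∑ v, (m v u : ℤ) * z v) - outdeg m u * z u

/-- Linear equivalence: `x ∼ y` iff `x = y + L z` for some integer vector `z`. -/
def LinEquiv (m : V → V → ℕ) (x y : V → ℤ) : Prop :=
  ∃ z : V → ℤ, x = y + lap m z

/-- A multidigraph (given by its multiplicity function) is acyclic if it has no directed cycle,
i.e. no vertex can reach itself by a directed walk of positive length. -/
def AcyclicMul (k : V → V → ℕ) : Prop :=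
  ∀ v : V, ¬ Relation.TransGen (fun a b => 0 < k a b) v v

/-!
In an infinite legal game every vertex fires infinitely often: the number of chips is conserved
and every vertex keeps at least `min (x v) 0` chips, so a vertex that stops firing while an
in-neighbour keeps firing would accumulate unboundedly many chips. Stop the game at a time `T`
by which every vertex has fired, and orient each edge towards the endpoint whose last firing
before `T` came first. Just after its last firing a vertex holds a nonnegative number of chips,
and afterwards it receives a chip along every edge from a vertex that fires later; so the state
at time `T` dominates the indegree vector `ρ` of this acyclic orientation.

Conversely, a sink `v` of an acyclic orientation has `ρ v = deg v`, so `v` may fire in `ρ + a`,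
and the result is `ρ' + a` for the orientation with all edges at `v` reversed, again acyclic.
Non-termination is preserved by arbitrary (even illegal) firings, since extra chips never spoil a
legal game, and on an undirected graph `L 1 = 0`, so `x = y + L z` may be taken with `z ≥ 0`.
-/

open Filter

section Laplacian

variable (m : V → V → ℕ)

section

omit [DecidableEq V]

theorem lap_add (y z : V → ℤ) : lap m (y + z) = lap m y + lap m z := by
  ext u
  simp only [lap, Pi.add_apply, mul_add, sum_add_distrib]
  ring

theorem lap_sub (y z : V → ℤ) : lap m (y - z) = lap m y - lap m z := by
  ext u
  simp only [lap, Pi.sub_apply, mul_sub, sum_sub_distrib]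
  ring

theorem lap_zero : lap m 0 = 0 := by
  simpa using lap_sub m 0 0

theorem lap_const (hsym : ∀ u v, m u v = m v u) (b : ℤ) : lap m (fun _ => b) = 0 := by
  ext u
  simp only [lap, outdeg, ← sum_mul, Pi.zero_apply, sub_eq_zero]
  rw [sum_congr rfl fun v _ => by rw [hsym v u]]

end

theorem fire_eq_add_lap_single (x : V → ℤ) (v : V) :
    fire m x v = x + lap m (Pi.single v 1) := by
  ext u
  by_cases h : u = v
  · subst h
    simp [fire, lap, Pi.single_apply]
    ring
  · simp [fire, lap, Pi.single_apply, h]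

theorem fire_comm (x : V → ℤ) (u v : V) : fire m (fire m x u) v = fire m (fire m x v) u := by
  simp only [fire_eq_add_lap_single]
  abel

theorem degSum_fire (x : V → ℤ) (v : V) : degSum (fire m x v) = degSum x := by
  simp only [degSum, fire, sum_sub_distrib, sum_add_distrib, sum_ite_eq', mem_univ, if_true,
    outdeg]
  ring

end Laplacian

section Game

variable (m : V → V → ℕ) (x : V → ℤ) (s : ℕ → V)

theorem gameState_succ' (n : ℕ) :
    gameState m x s (n + 1) = gameState m (fire m x (s 0)) (fun k => s (k + 1)) n := by
  induction n with
  | zero => rfl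
  | succ n ih => rw [gameState, ih]; rfl

theorem degSum_gameState (n : ℕ) :
    degSum (gameState m x s n) = degSum x := by
  induction n with
  | zero => rfl
  | succ n ih => rw [gameState, degSum_fire, ih]

theorem linEquiv_gameState (n : ℕ) :
    LinEquiv m x (gameState m x s n) := by
  induction n with
  | zero => exact ⟨0, by ext; simp [lap, gameState]⟩
  | succ n ih =>
    obtain ⟨z, hz⟩ := ih
    refine ⟨z - Pi.single (s n) 1, ?_⟩
    rw [gameState, fire_eq_add_lap_single, lap_sub]
    exact hz.trans (by abel)

variable {m x s}

theorem gameState_eq_add_sum_of_not_fired {w : V} {i j : ℕ} (hij : i ≤ j)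
    (hw : ∀ k ∈ Ico i j, s k ≠ w) :
    gameState m x s j w = gameState m x s i w + ∑ k ∈ Ico i j, (m (s k) w : ℤ) := by
  induction j, hij using Nat.le_induction with
  | base => simp
  | succ j hij ih =>
    have hj : w ≠ s j := (hw j (by simp; omega)).symm
    rw [sum_Ico_succ_top hij, ← add_assoc, ← ih fun k hk => hw k (by simp at hk ⊢; omega)]
    simp [gameState, fire, hj]

theorem InfGame.min_le_gameState (hs : InfGame m x s) (n : ℕ) (u : V) :
    min (x u) 0 ≤ gameState m x s n u := by
  induction n with
  | zero => exact min_le_left _ _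
  | succ n ih =>
    have hleg := hs n
    simp only [gameState, fire]
    split_ifs with h
    · subst h
      omega
    · omega

theorem InfGame.gameState_le (hs : InfGame m x s) (n : ℕ) (u : V) :
    gameState m x s n u ≤ degSum x - ∑ w, min (x w) 0 := by
  have hsum : gameState m x s n u - min (x u) 0 ≤
      ∑ w, (gameState m x s n w - min (x w) 0) :=
    single_le_sum (f := fun w => gameState m x s n w - min (x w) 0)
      (fun w _ => sub_nonneg.2 (hs.min_le_gameState n w)) (mem_univ u)
  have hdeg : ∑ w, gameState m x s n w = degSum x := degSum_gameState m x s n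
  rw [sum_sub_distrib, hdeg] at hsum
  linarith [min_le_right (x u) 0]

theorem InfGame.frequently_fire_of_pos (hs : InfGame m x s) {u w : V}
    (hu : ∃ᶠ n in atTop, s n = u) (huw : 0 < m u w) :
    ∃ᶠ n in atTop, s n = w := by
  by_contra hw
  obtain ⟨N, hN⟩ := eventually_atTop.1 (not_frequently.1 hw)
  have grow : ∀ c : ℕ, ∃ n, N ≤ n ∧ gameState m x s N w + c ≤ gameState m x s n w := by
    intro c
    induction c with
    | zero => exact ⟨N, le_rfl, by simp⟩
    | succ c ih =>
      obtain ⟨n, hNn, hn⟩ := ih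
      obtain ⟨n', hnn', hn'⟩ := frequently_atTop.1 hu n
      have hgain : gameState m x s (n' + 1) w = gameState m x s n w +
          ∑ k ∈ Ico n (n' + 1), (m (s k) w : ℤ) :=
        gameState_eq_add_sum_of_not_fired (by omega) fun k hk => hN k (by simp at hk; omega)
      have hone : (1 : ℤ) ≤ ∑ k ∈ Ico n (n' + 1), (m (s k) w : ℤ) :=
        calc (1 : ℤ) ≤ m (s n') w := by rw [hn']; exact_mod_cast huw
          _ ≤ _ := single_le_sum (f := fun k => (m (s k) w : ℤ))
            (fun k _ => Int.natCast_nonneg _) (by simp; omega)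
      exact ⟨n' + 1, by omega, by push_cast; linarith⟩
  obtain ⟨c, hc⟩ := exists_nat_gt (degSum x - ∑ w, min (x w) 0 - gameState m x s N w)
  obtain ⟨n, -, hn⟩ := grow c
  linarith [hs.gameState_le n w]

theorem InfGame.frequently_fire (hconn : StronglyConnected m) (hs : InfGame m x s) (v : V) :
    ∃ᶠ n in atTop, s n = v := by
  obtain ⟨v₀, hv₀⟩ : ∃ v₀, ∃ᶠ n in atTop, s n = v₀ :=
    frequently_exists.1 (Frequently.of_forall fun n => ⟨s n, rfl⟩)
  induction hconn v₀ v with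
  | refl => exact hv₀
  | tail _ huw ih => exact hs.frequently_fire_of_pos ih huw

theorem InfGame.sum_le_gameState_of_last_fire (hs : InfGame m x s) {i j : ℕ} (hij : i < j)
    (hlast : ∀ k ∈ Ico (i + 1) j, s k ≠ s i) :
    ∑ k ∈ Ico (i + 1) j, (m (s k) (s i) : ℤ) ≤ gameState m x s j (s i) := by
  rw [gameState_eq_add_sum_of_not_fired (show i + 1 ≤ j from hij) hlast]
  have hleg := hs i
  have hfired : gameState m x s (i + 1) (s i) =
      gameState m x s i (s i) + m (s i) (s i) - outdeg m (s i) := by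
    simp [gameState, fire]
  omega

theorem exists_last_fire (hfire : ∀ v, ∃ n, s n = v) :
    ∃ T, ∃ L : V → ℕ, ∀ v, s (L v) = v ∧ L v < T ∧ ∀ k ∈ Ico (L v + 1) T, s k ≠ v := by
  choose first hfirst using hfire
  refine ⟨univ.sup first + 1, fun v => Nat.findGreatest (s · = v) (univ.sup first), fun v =>
    ⟨Nat.findGreatest_spec (P := (s · = v)) (le_sup (mem_univ v)) (hfirst v), ?_, fun k hk => ?_⟩⟩
  · exact Nat.lt_succ_of_le (Nat.findGreatest_le _)
  · rw [mem_Ico] at hk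
    exact Nat.findGreatest_is_greatest (P := (s · = v)) hk.1 (by omega)

end Game

section Acyclic

variable {o : V → V → ℕ} {v : V}

omit [DecidableEq V] in
theorem acyclicMul_iff_exists_height {k : V → V → ℕ} :
    AcyclicMul k ↔ ∃ f : V → ℕ, ∀ a b, 0 < k a b → f b < f a := by
  classical
  constructor
  · intro hk
    refine ⟨fun a => #{b | Relation.TransGen (fun a b => 0 < k a b) a b},
      fun a b hab => card_lt_card ((ssubset_iff_of_subset ?_).2 ⟨b, ?_, ?_⟩)⟩
    · intro c
      simp only [mem_filter, mem_univ, true_and]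
      exact .head hab
    · exact mem_filter.2 ⟨mem_univ _, .single hab⟩
    · simpa using hk b
  · rintro ⟨f, hf⟩ v hv
    have hlt : ∀ a b, Relation.TransGen (fun a b => 0 < k a b) a b → f b < f a := by
      intro a b h
      induction h with
      | single h => exact hf _ _ h
      | tail _ h ih => exact (hf _ _ h).trans ih
    exact lt_irrefl _ (hlt v v hv)

omit [DecidableEq V] in
theorem AcyclicMul.exists_sink [Nonempty V] (ho : AcyclicMul o) : ∃ v, ∀ u, o v u = 0 := by
  obtain ⟨f, hf⟩ := acyclicMul_iff_exists_height.1 ho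
  obtain ⟨v, -, hv⟩ := exists_min_image univ f univ_nonempty
  exact ⟨v, fun u => Nat.eq_zero_of_not_pos fun h => (hf v u h).not_ge (hv u (mem_univ u))⟩

def IsOrientation (m o : V → V → ℕ) : Prop :=
  ∀ u v, o u v + o v u = m u v

def orientByRank (m : V → V → ℕ) (f : V → ℕ) : V → V → ℕ :=
  fun u v => if f v < f u then m u v else 0

omit [Fintype V] [DecidableEq V] in
theorem isOrientation_orientByRank {m : V → V → ℕ} (hsym : ∀ u v, m u v = m v u)
    (hloop : Loopless m) {f : V → ℕ} (hf : Function.Injective f) :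
    IsOrientation m (orientByRank m f) := by
  intro u v
  rcases lt_trichotomy (f u) (f v) with h | h | h
  · simp [orientByRank, h, lt_asymm h, hsym]
  · obtain rfl := hf h
    simp [orientByRank, hloop u]
  · simp [orientByRank, h, lt_asymm h]

omit [DecidableEq V] in
theorem acyclicMul_orientByRank (m : V → V → ℕ) (f : V → ℕ) : AcyclicMul (orientByRank m f) :=
  acyclicMul_iff_exists_height.2 ⟨f, fun a b h => by
    by_contra hc
    simp [orientByRank, hc] at h⟩

omit [DecidableEq V] in
theorem indeg_orientByRank (m : V → V → ℕ) (f : V → ℕ) (v : V) :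
    indeg (orientByRank m f) v = ∑ u with f v < f u, (m u v : ℤ) := by
  simp [indeg, orientByRank, sum_filter, apply_ite]

def reverseAt (o : V → V → ℕ) (v : V) : V → V → ℕ :=
  fun p q => if p = v ∨ q = v then o q p else o p q

omit [Fintype V] in
theorem isOrientation_reverseAt {m : V → V → ℕ} (ho : IsOrientation m o) (v : V) :
    IsOrientation m (reverseAt o v) := by
  intro p q
  by_cases h : p = v ∨ q = v
  · rw [reverseAt, reverseAt, if_pos h, if_pos h.symm, add_comm]
    exact ho p q
  · rw [reverseAt, reverseAt, if_neg h, if_neg (by tauto)]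
    exact ho p q

theorem acyclicMul_reverseAt (ho : AcyclicMul o) (hv : ∀ u, o v u = 0) :
    AcyclicMul (reverseAt o v) := by
  obtain ⟨f, hf⟩ := acyclicMul_iff_exists_height.1 ho
  refine acyclicMul_iff_exists_height.2
    ⟨Function.update f v (univ.sup f + 1), fun p q hpq => ?_⟩
  unfold reverseAt at hpq
  split_ifs at hpq with h
  · have hq : q ≠ v := by
      rintro rfl
      simp [hv] at hpq
    obtain rfl : p = v := h.resolve_right hq
    simp [Function.update_of_ne hq, Nat.lt_succ_of_le (le_sup (mem_univ q))]
  · push Not at h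
    simp [Function.update_of_ne h.1, Function.update_of_ne h.2, hf p q hpq]

end Acyclic

section Sink

variable {m o : V → V → ℕ} {v : V}

omit [DecidableEq V] in
theorem IsOrientation.indeg_eq_outdeg_of_sink (ho : IsOrientation m o) (hv : ∀ u, o v u = 0) :
    indeg o v = outdeg m v := by
  refine sum_congr rfl fun p _ => ?_
  have := ho v p
  rw [hv] at this
  omega

theorem IsOrientation.fire_indeg_add (ho : IsOrientation m o) (hv : ∀ u, o v u = 0)
    (a : V → ℤ) : fire m (indeg o + a) v = indeg (reverseAt o v) + a := by
  have hrev : ∀ p u, (reverseAt o v p u : ℤ) =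
      o p u + (if p = v then (m v u : ℤ) else 0) - (if u = v then (m v p : ℤ) else 0) := by
    intro p u
    have h₁ := ho v u
    have h₂ := ho v p
    by_cases hp : p = v <;> by_cases hu : u = v <;>
      simp [reverseAt, hp, hu, hv] at h₁ h₂ ⊢ <;> omega
  ext u
  simp only [fire, Pi.add_apply, indeg, hrev, sum_sub_distrib, sum_add_distrib, sum_ite_eq',
    mem_univ, if_true]
  split_ifs <;> simp [outdeg] <;> ring

end Sink

section Termination

variable {m : V → V → ℕ} {x y : V → ℤ} {s : ℕ → V}

theorem exists_legal_fire_of_not_terminating (hx : ¬ Terminating m x) :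
    ∃ v, outdeg m v ≤ x v ∧ ¬ Terminating m (fire m x v) := by
  obtain ⟨s, hs⟩ := not_not.1 hx
  exact ⟨s 0, hs 0, not_not.2 ⟨fun n => s (n + 1), fun n => gameState_succ' m x s n ▸ hs (n + 1)⟩⟩

theorem not_terminating_iff_exists_closed :
    ¬ Terminating m x ↔
      ∃ S : Set (V → ℤ), x ∈ S ∧ ∀ y ∈ S, ∃ v, outdeg m v ≤ y v ∧ fire m y v ∈ S := by
  constructor
  · exact fun hx => ⟨{y | ¬ Terminating m y}, hx, fun y => exists_legal_fire_of_not_terminating⟩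
  · rintro ⟨S, hx, hS⟩
    have : Nonempty V := ⟨(hS x hx).choose⟩
    choose! g hleg hmem using hS
    let step : (V → ℤ) → (V → ℤ) := fun y => fire m y (g y)
    have hstepS : ∀ n, step^[n] x ∈ S := by
      intro n
      induction n with
      | zero => exact hx
      | succ n ih => rw [Function.iterate_succ_apply']; exact hmem _ ih
    have hstate : ∀ n, gameState m x (fun n => g (step^[n] x)) n = step^[n] x := by
      intro n
      induction n with
      | zero => rfl
      | succ n ih => rw [gameState, ih, Function.iterate_succ_apply']
    exact not_not.2 ⟨fun n => g (step^[n] x), fun n => (hstate n).symm ▸ hleg _ (hstepS n)⟩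

/-- If the legal game from `y` fires `u ≠ v` next, `u` is still legal after `v` is fired, and
the two firings commute. -/
theorem not_terminating_fire (hy : ¬ Terminating m y) (v : V) :
    ¬ Terminating m (fire m y v) := by
  let S : Set (V → ℤ) := {w | ¬ Terminating m w ∨ ∃ y, ¬ Terminating m y ∧ w = fire m y v}
  have of_not_terminating : ∀ w, ¬ Terminating m w → ∃ u, outdeg m u ≤ w u ∧ fire m w u ∈ S := by
    intro w hw
    obtain ⟨u, hu, hwu⟩ := exists_legal_fire_of_not_terminating hw
    exact ⟨u, hu, .inl hwu⟩
  refine not_terminating_iff_exists_closed.2 ⟨S, .inr ⟨y, hy, rfl⟩, ?_⟩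
  rintro w (hw | ⟨y, hy, rfl⟩)
  · exact of_not_terminating w hw
  obtain ⟨u, hu, hyu⟩ := exists_legal_fire_of_not_terminating hy
  by_cases huv : u = v
  · exact of_not_terminating _ (huv ▸ hyu)
  refine ⟨u, ?_, .inr ⟨fire m y u, hyu, fire_comm m y v u⟩⟩
  simp only [fire, if_neg huv]
  omega

theorem not_terminating_add_lap_single (hy : ¬ Terminating m y) (v : V) (k : ℕ) :
    ¬ Terminating m (y + lap m (Pi.single v (k : ℤ))) := by
  induction k with
  | zero => simpa [lap_zero] using hy
  | succ k ih =>
    rw [Nat.cast_succ, Pi.single_add, lap_add, ← add_assoc, ← fire_eq_add_lap_single]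
    exact not_terminating_fire ih v

theorem not_terminating_add_lap_natCast (hy : ¬ Terminating m y) (c : V → ℕ) :
    ¬ Terminating m (y + lap m (fun v => (c v : ℤ))) := by
  induction c using Pi.single_induction generalizing y with
  | zero => simpa [← Pi.zero_def, lap_zero] using hy
  | add c₁ c₂ h₁ h₂ =>
    have hcast : (fun v => ((c₁ + c₂) v : ℤ)) = (fun v => (c₁ v : ℤ)) + fun v => (c₂ v : ℤ) := by
      ext
      simp
    rw [hcast, lap_add, ← add_assoc]
    exact h₂ (h₁ hy)
  | single v k =>
    convert not_terminating_add_lap_single hy v k using 4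
    ext u
    by_cases h : u = v <;> simp [h]

theorem not_terminating_of_linEquiv (hsym : ∀ u v, m u v = m v u) (h : LinEquiv m x y)
    (hy : ¬ Terminating m y) : ¬ Terminating m x := by
  obtain ⟨z, rfl⟩ := h
  obtain ⟨b, hb⟩ := (Set.finite_range z).bddBelow
  have hz : z = (fun v => ((z v - b).toNat : ℤ)) + fun _ => b := by
    ext v
    have := hb (Set.mem_range_self v)
    simp only [Pi.add_apply]
    omega
  rw [hz, lap_add, lap_const m hsym, add_zero]
  exact not_terminating_add_lap_natCast hy _

theorem not_terminating_indeg_add [Nonempty V] {o : V → V → ℕ} {a : V → ℤ}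
    (ho : IsOrientation m o) (hacyc : AcyclicMul o) (ha : 0 ≤ a) :
    ¬ Terminating m (indeg o + a) := by
  refine not_terminating_iff_exists_closed.2
    ⟨{w | ∃ o, IsOrientation m o ∧ AcyclicMul o ∧ w = indeg o + a}, ⟨o, ho, hacyc, rfl⟩, ?_⟩
  rintro _ ⟨o, ho, hacyc, rfl⟩
  obtain ⟨v, hv⟩ := hacyc.exists_sink
  refine ⟨v, ?_, reverseAt o v, isOrientation_reverseAt ho v, acyclicMul_reverseAt hacyc hv,
    ho.fire_indeg_add hv a⟩
  rw [Pi.add_apply, ho.indeg_eq_outdeg_of_sink hv]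
  exact le_add_of_nonneg_right (ha v)

theorem InfGame.indeg_orientByRank_le_gameState (hs : InfGame m x s) {T : ℕ} {L : V → ℕ}
    (hLs : ∀ v, s (L v) = v) (hLT : ∀ v, L v < T) (hlast : ∀ v, ∀ k ∈ Ico (L v + 1) T, s k ≠ v)
    (v : V) : indeg (orientByRank m L) v ≤ gameState m x s T v :=
  calc indeg (orientByRank m L) v = ∑ u with L v < L u, (m u v : ℤ) := indeg_orientByRank m L v
    _ = ∑ k ∈ image L {u | L v < L u}, (m (s k) (s (L v)) : ℤ) := by
      rw [sum_image (Function.LeftInverse.injective hLs).injOn]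
      simp [hLs]
    _ ≤ ∑ k ∈ Ico (L v + 1) T, (m (s k) (s (L v)) : ℤ) := by
      refine sum_le_sum_of_subset_of_nonneg (fun k hk => ?_) fun _ _ _ => Int.natCast_nonneg _
      obtain ⟨u, hu, rfl⟩ := mem_image.1 hk
      simp only [mem_filter, mem_univ, true_and] at hu
      exact mem_Ico.2 ⟨hu, hLT u⟩
    _ ≤ gameState m x s T (s (L v)) :=
      hs.sum_le_gameState_of_last_fire (hLT v) ((hLs v).symm ▸ hlast v)
    _ = gameState m x s T v := by rw [hLs]

theorem InfGame.exists_acyclic_orientation (hsym : ∀ u v, m u v = m v u) (hloop : Loopless m)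
    (hconn : StronglyConnected m) (hs : InfGame m x s) :
    ∃ o, IsOrientation m o ∧ AcyclicMul o ∧ ∃ a, 0 ≤ a ∧ LinEquiv m x (indeg o + a) := by
  obtain ⟨T, L, hL⟩ := exists_last_fire fun v => (hs.frequently_fire hconn v).exists
  choose hLs hLT hlast using hL
  refine ⟨orientByRank m L, isOrientation_orientByRank hsym hloop
    (Function.LeftInverse.injective hLs), acyclicMul_orientByRank m L,
    gameState m x s T - indeg (orientByRank m L),
    fun v => sub_nonneg.2 (hs.indeg_orientByRank_le_gameState hLs hLT hlast v), ?_⟩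
  rw [add_sub_cancel]
  exact linEquiv_gameState m x s T

end Termination

/-- On an undirected graph (bidirected digraph), a chip-distribution `x` is
non-terminating iff `x ∼ ρ + a` for the indegree vector `ρ` of some acyclic orientation
and some `a ≥ 0`. -/
theorem nonterminating_iff_acyclic_orientation
    {V : Type} [Fintype V] [DecidableEq V] [Nonempty V]
    (m : V → V → ℕ) (hsym : ∀ u v, m u v = m v u)
    (hloop : Loopless m) (hconn : StronglyConnected m)
    (x : V → ℤ) :
    ¬ Terminating m x ↔
      ∃ o : V → V → ℕ, (∀ u v, o u v + o v u = m u v) ∧ AcyclicMul o ∧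
        ∃ a : V → ℤ, 0 ≤ a ∧ LinEquiv m x (fun v => (∑ u, (o u v : ℤ)) + a v) := by
  constructor
  · intro hx
    obtain ⟨s, hs⟩ := not_not.1 hx
    exact hs.exists_acyclic_orientation hsym hloop hconn
  · rintro ⟨o, ho, hacyc, a, ha, hx⟩
    exact not_terminating_of_linEquiv hsym hx (not_terminating_indeg_add ho hacyc ha)
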